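/- Let ψ be a pure state on H_A ⊗ H_B ⊗ H_C of the triangle form ψ = ψ_{A_R B_L} ⊗ ψ_{B_R C_L} ⊗ ψ_{C_R A_L}, where each local space splits as H_α = H_{α_L} ⊗ H_{α_R}. Then 2 S(ρ_A) computed from ψ equals I(A:B) + I(A:C), i.e., S(A) = S(A_L) + S(A_R) with S(A_R) = (1/2)I(A:B) and S(A_L) = (1/2)I(A:C). -/
import Mathlib


open scoped Classical ComplexOrder

/-- von Neumann entropy of a (Hermitian) matrix, via its spectrum. -/
noncomputable def vnEntropy {n : Type*} [Fintype n] [DecidableEq n]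
    (ρ : Matrix n n ℂ) : ℝ :=
  if h : ρ.IsHermitian then -∑ i, h.eigenvalues i * Real.log (h.eigenvalues i) else 0

/-- Reduced density matrix of a bipartite pure state `ψ : α × β → ℂ` on `α`. -/
noncomputable def redDM {α β : Type*} [Fintype β] (ψ : α × β → ℂ) : Matrix α α ℂ :=
  Matrix.of fun a a' => ∑ b, ψ (a, b) * (starRingEnd ℂ) (ψ (a', b))

/-- Entanglement entropy of the subsystem `α` for the bipartite pure state `ψ`. -/
noncomputable def SE {α β : Type*} [Fintype α] [DecidableEq α] [Fintype β]
    (ψ : α × β → ℂ) : ℝ := vnEntropy (redDM ψ)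

section AUX
open Polynomial Matrix


variable {R : Type*} [CommRing R]

theorem charpoly_mul_comm_pow {m n : Type*} [Fintype m] [DecidableEq m] [Fintype n] [DecidableEq n]
    (A : Matrix m n R) (B : Matrix n m R) :
    X ^ (Fintype.card n) * (A * B).charpoly = X ^ (Fintype.card m) * (B * A).charpoly := by
  classical
  set A' : Matrix m n R[X] := A.map C with hA'
  set B' : Matrix n m R[X] := B.map C with hB'
  set Dm : Matrix m m R[X] := Matrix.diagonal (fun _ => (X : R[X])) with hDm
  set Dn : Matrix n n R[X] := Matrix.diagonal (fun _ => (X : R[X])) with hDn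
  have hA'Dn : A' * Dn = (X : R[X]) • A' := by
    ext i j; simp [hDn, Matrix.mul_diagonal, mul_comm]
  have hDmA' : Dm * A' = (X : R[X]) • A' := by
    ext i j; simp [hDm, Matrix.diagonal_mul]
  set M : Matrix (m ⊕ n) (m ⊕ n) R[X] := Matrix.fromBlocks Dm ((X : R[X]) • A') B' Dn with hM
  set E : Matrix (m ⊕ n) (m ⊕ n) R[X] := Matrix.fromBlocks 1 (-A') 0 1 with hE
  have hdetE : E.det = 1 := by
    rw [hE, Matrix.det_fromBlocks_zero₂₁]; simp
  have hcp1 : Dm - A' * B' = charmatrix (A * B) := by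
    ext i j
    by_cases h : i = j
    · subst h; simp [hDm, charmatrix_apply_eq, hA', hB', Matrix.mul_apply, map_sum]
    · simp [hDm, Matrix.diagonal_apply_ne _ h, charmatrix_apply_ne _ _ _ h, hA', hB',
        Matrix.mul_apply, map_sum]
  have hcp2 : Dn - B' * A' = charmatrix (B * A) := by
    ext i j
    by_cases h : i = j
    · subst h; simp [hDn, charmatrix_apply_eq, hA', hB', Matrix.mul_apply, map_sum]
    · simp [hDn, Matrix.diagonal_apply_ne _ h, charmatrix_apply_ne _ _ _ h, hA', hB',
        Matrix.mul_apply, map_sum]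
  have h1 : (E * M).det = X ^ (Fintype.card n) * (A * B).charpoly := by
    have hblocks : E * M = Matrix.fromBlocks (Dm - A' * B') 0 B' Dn := by
      rw [hE, hM, Matrix.fromBlocks_multiply]
      congr 1 <;> simp [sub_eq_add_neg, Matrix.neg_mul, hA'Dn]
    rw [hblocks, Matrix.det_fromBlocks_zero₁₂, hcp1]
    have hdn : Dn.det = (X : R[X]) ^ (Fintype.card n) := by simp [hDn, Matrix.det_diagonal]
    rw [hdn, Matrix.charpoly, mul_comm]
  have h2 : (M * E).det = X ^ (Fintype.card m) * (B * A).charpoly := by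
    have hblocks : M * E = Matrix.fromBlocks Dm 0 B' (Dn - B' * A') := by
      rw [hE, hM, Matrix.fromBlocks_multiply]
      congr 1 <;> simp [sub_eq_add_neg, Matrix.mul_neg, hDmA'] <;> try abel
    rw [hblocks, Matrix.det_fromBlocks_zero₁₂, hcp2]
    have hdm : Dm.det = (X : R[X]) ^ (Fintype.card m) := by simp [hDm, Matrix.det_diagonal]
    rw [hdm, Matrix.charpoly]
  rw [← h1, ← h2, Matrix.det_mul, Matrix.det_mul, hdetE, one_mul, mul_one]


theorem my_charpoly_diagonal {n : Type*} [Fintype n] [DecidableEq n] {R : Type*} [CommRing R]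
    (d : n → R) : (Matrix.diagonal d).charpoly = ∏ i, (X - C (d i)) := by
  have h : charmatrix (Matrix.diagonal d) = Matrix.diagonal (fun i => (X : R[X]) - C (d i)) := by
    ext i j
    by_cases hij : i = j
    · subst hij; simp [charmatrix_apply_eq]
    · simp [charmatrix_apply_ne _ _ _ hij, Matrix.diagonal_apply_ne _ hij,
        Matrix.diagonal_apply_ne d hij]
  rw [Matrix.charpoly, h, Matrix.det_diagonal]

theorem charpoly_isHermitian {n : Type*} [Fintype n] [DecidableEq n] {A : Matrix n n ℂ}
    (hA : A.IsHermitian) :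
    A.charpoly = ∏ i, (X - C ((hA.eigenvalues i : ℂ))) := by
  set U := (Matrix.IsHermitian.eigenvectorUnitary hA : Matrix n n ℂ) with hU
  set D := Matrix.diagonal ((↑) ∘ hA.eigenvalues : n → ℂ) with hD
  have hsp : A = U * D * star U := hA.spectral_theorem
  have hkey := charpoly_mul_comm_pow (U * D) (star U)
  have hUU : star U * (U * D) = D := by
    rw [← mul_assoc, (Matrix.mem_unitaryGroup_iff'.mp (Matrix.IsHermitian.eigenvectorUnitary hA).2), one_mul]
  rw [hUU] at hkey
  have : A.charpoly = D.charpoly := by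
    have := mul_left_cancel₀ (pow_ne_zero (Fintype.card n) (Polynomial.X_ne_zero (R := ℂ))) hkey
    rw [← hsp] at this
    exact this
  rw [this, hD, my_charpoly_diagonal]
  rfl

theorem roots_charpoly_isHermitian {n : Type*} [Fintype n] [DecidableEq n] {A : Matrix n n ℂ}
    (hA : A.IsHermitian) :
    A.charpoly.roots = Multiset.map (fun i => ((hA.eigenvalues i : ℂ))) Finset.univ.val := by
  rw [charpoly_isHermitian hA]
  rw [Finset.prod_eq_multiset_prod]
  rw [show Multiset.map (fun i => X - C ((hA.eigenvalues i : ℂ))) Finset.univ.val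
      = Multiset.map (fun a => X - C a)
          (Multiset.map (fun i => ((hA.eigenvalues i : ℂ))) Finset.univ.val) by
    rw [Multiset.map_map]; rfl]
  exact Polynomial.roots_multiset_prod_X_sub_C _

/-- entropy contribution of a complex root -/
noncomputable def entg (z : ℂ) : ℝ := -(z.re * Real.log z.re)

@[simp] lemma entg_zero : entg 0 = 0 := by simp [entg]
@[simp] lemma entg_one : entg 1 = 0 := by simp [entg]

noncomputable def rootEnt {n : Type*} [Fintype n] [DecidableEq n] (A : Matrix n n ℂ) : ℝ :=
  ((A.charpoly.roots).map entg).sum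

lemma vnEntropy_eq_rootEnt {n : Type*} [Fintype n] [DecidableEq n] {A : Matrix n n ℂ}
    (hA : A.IsHermitian) : vnEntropy A = rootEnt A := by
  rw [vnEntropy, dif_pos hA, rootEnt, roots_charpoly_isHermitian hA, Multiset.map_map]
  rw [show ((Finset.univ.val.map (entg ∘ fun i => ((hA.eigenvalues i : ℂ)))).sum)
      = ∑ i, entg ((hA.eigenvalues i : ℂ)) from rfl]
  simp [entg, Finset.sum_neg_distrib]

lemma rootEnt_congr {m n : Type*} [Fintype m] [DecidableEq m] [Fintype n] [DecidableEq n]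
    {A : Matrix m m ℂ} {B : Matrix n n ℂ} {a b : ℕ}
    (h : X ^ a * A.charpoly = X ^ b * B.charpoly) : rootEnt A = rootEnt B := by
  have key1 : (((X ^ a * A.charpoly).roots).map entg).sum = rootEnt A := by
    rw [Polynomial.roots_mul (mul_ne_zero (pow_ne_zero a Polynomial.X_ne_zero)
      (Matrix.charpoly_monic A).ne_zero), Polynomial.roots_pow, Polynomial.roots_X,
      Multiset.map_add, Multiset.sum_add, Multiset.nsmul_singleton, Multiset.map_replicate,
      Multiset.sum_replicate, entg_zero, smul_zero, zero_add, rootEnt]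
  have key2 : (((X ^ b * B.charpoly).roots).map entg).sum = rootEnt B := by
    rw [Polynomial.roots_mul (mul_ne_zero (pow_ne_zero b Polynomial.X_ne_zero)
      (Matrix.charpoly_monic B).ne_zero), Polynomial.roots_pow, Polynomial.roots_X,
      Multiset.map_add, Multiset.sum_add, Multiset.nsmul_singleton, Multiset.map_replicate,
      Multiset.sum_replicate, entg_zero, smul_zero, zero_add, rootEnt]
  rw [← key1, ← key2, h]

lemma vnEntropy_mul_conjTranspose {m n : Type*} [Fintype m] [DecidableEq m]
    [Fintype n] [DecidableEq n] (G : Matrix m n ℂ) :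
    vnEntropy (G * Gᴴ) = vnEntropy (Gᴴ * G) := by
  rw [vnEntropy_eq_rootEnt (Matrix.isHermitian_mul_conjTranspose_self G),
    vnEntropy_eq_rootEnt (Matrix.isHermitian_conjTranspose_mul_self G)]
  exact rootEnt_congr (charpoly_mul_comm_pow G Gᴴ)

lemma my_charpoly_transpose {n : Type*} [Fintype n] [DecidableEq n] {R : Type*} [CommRing R]
    (M : Matrix n n R) : Mᵀ.charpoly = M.charpoly := by
  have h : charmatrix Mᵀ = (charmatrix M)ᵀ := by
    ext i j
    by_cases hij : i = j
    · subst hij; simp [charmatrix_apply_eq]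
    · simp [charmatrix_apply_ne _ _ _ hij, charmatrix_apply_ne _ _ _ (Ne.symm hij)]
  rw [Matrix.charpoly, h, Matrix.det_transpose, Matrix.charpoly]

lemma vnEntropy_submatrix {m n : Type*} [Fintype m] [DecidableEq m] [Fintype n] [DecidableEq n]
    {A : Matrix n n ℂ} (hA : A.IsHermitian) (e : m ≃ n) :
    vnEntropy (A.submatrix e e) = vnEntropy A := by
  have hsub : (A.submatrix e e).IsHermitian := hA.submatrix e
  rw [vnEntropy_eq_rootEnt hsub, vnEntropy_eq_rootEnt hA, rootEnt, rootEnt]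
  have : A.submatrix e e = Matrix.reindex e.symm e.symm A := rfl
  rw [this, Matrix.charpoly_reindex]

end AUX

section AUX2
open Polynomial Matrix Kronecker

lemma rootEnt_diagonal {n : Type*} [Fintype n] [DecidableEq n] (d : n → ℂ) :
    rootEnt (Matrix.diagonal d) = ∑ i, entg (d i) := by
  rw [rootEnt, my_charpoly_diagonal, Finset.prod_eq_multiset_prod,
    show Multiset.map (fun i => X - C (d i)) Finset.univ.val
      = Multiset.map (fun a => X - C a) (Multiset.map d Finset.univ.val) by
        rw [Multiset.map_map]; rfl,
    Polynomial.roots_multiset_prod_X_sub_C, Multiset.map_map]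
  rfl

lemma sum_eigenvalues_eq_one {n : Type*} [Fintype n] [DecidableEq n] {A : Matrix n n ℂ}
    (hA : A.IsHermitian) (ht : A.trace = 1) : ∑ i, hA.eigenvalues i = 1 := by
  have h := Matrix.trace_eq_sum_roots_charpoly A
  rw [roots_charpoly_isHermitian hA] at h
  rw [show (Multiset.map (fun i => ((hA.eigenvalues i : ℂ))) Finset.univ.val).sum
      = ∑ i, ((hA.eigenvalues i : ℂ)) from rfl] at h
  rw [ht] at h
  have h2 : ((∑ i, hA.eigenvalues i : ℝ) : ℂ) = 1 := by
    rw [Complex.ofReal_sum]; exact h.symm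
  exact_mod_cast h2

lemma kronecker_conjT {l m n p : Type*} (A : Matrix l m ℂ) (B : Matrix n p ℂ) :
    (A ⊗ₖ B)ᴴ = (Aᴴ) ⊗ₖ (Bᴴ) := by
  ext ⟨i, j⟩ ⟨k, l'⟩
  simp [Matrix.conjTranspose_apply, Matrix.kroneckerMap_apply, star_mul']

lemma star_kronecker {m n : Type*} (A : Matrix m m ℂ) (B : Matrix n n ℂ) :
    star (A ⊗ₖ B) = (star A) ⊗ₖ (star B) := by
  rw [Matrix.star_eq_conjTranspose, Matrix.star_eq_conjTranspose, Matrix.star_eq_conjTranspose,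
    kronecker_conjT]

lemma isHermitian_kronecker {m n : Type*} {A : Matrix m m ℂ} {B : Matrix n n ℂ}
    (hA : A.IsHermitian) (hB : B.IsHermitian) : (A ⊗ₖ B).IsHermitian := by
  rw [Matrix.IsHermitian, kronecker_conjT, hA, hB]

lemma ent_mul_real (x y : ℝ) :
    -((x * y) * Real.log (x * y)) = y * -(x * Real.log x) + x * -(y * Real.log y) := by
  by_cases hx : x = 0
  · simp [hx]
  by_cases hy : y = 0
  · simp [hy]
  rw [Real.log_mul hx hy]; ring

lemma vnEntropy_kronecker {m n : Type*} [Fintype m] [DecidableEq m] [Fintype n] [DecidableEq n]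
    {A : Matrix m m ℂ} {B : Matrix n n ℂ} (hA : A.IsHermitian) (hB : B.IsHermitian)
    (hta : A.trace = 1) (htb : B.trace = 1) :
    vnEntropy (A ⊗ₖ B) = vnEntropy A + vnEntropy B := by
  have sa := sum_eigenvalues_eq_one hA hta
  have sb := sum_eigenvalues_eq_one hB htb
  set U₁ := (Matrix.IsHermitian.eigenvectorUnitary hA : Matrix m m ℂ) with hU₁
  set U₂ := (Matrix.IsHermitian.eigenvectorUnitary hB : Matrix n n ℂ) with hU₂
  set D₁ := Matrix.diagonal ((↑) ∘ hA.eigenvalues : m → ℂ) with hD₁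
  set D₂ := Matrix.diagonal ((↑) ∘ hB.eigenvalues : n → ℂ) with hD₂
  set W := U₁ ⊗ₖ U₂ with hW
  have hfact : A ⊗ₖ B = W * (D₁ ⊗ₖ D₂) * star W := by
    conv_lhs => rw [hA.spectral_theorem, hB.spectral_theorem]
    rw [hW, star_kronecker, ← Matrix.mul_kronecker_mul, ← Matrix.mul_kronecker_mul]
    rfl
  have hWW : star W * W = 1 := by
    rw [hW, star_kronecker, ← Matrix.mul_kronecker_mul,
      (Matrix.mem_unitaryGroup_iff'.mp (Matrix.IsHermitian.eigenvectorUnitary hA).2),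
      (Matrix.mem_unitaryGroup_iff'.mp (Matrix.IsHermitian.eigenvectorUnitary hB).2),
      Matrix.one_kronecker_one]
  have hc : (A ⊗ₖ B).charpoly = (D₁ ⊗ₖ D₂).charpoly := by
    have hkey := charpoly_mul_comm_pow (W * (D₁ ⊗ₖ D₂)) (star W)
    rw [mul_assoc, ← mul_assoc (star W), hWW, one_mul] at hkey
    have := mul_left_cancel₀
      (pow_ne_zero (Fintype.card (m × n)) (Polynomial.X_ne_zero (R := ℂ))) hkey
    rw [← mul_assoc, ← hfact] at this
    exact this
  rw [vnEntropy_eq_rootEnt (isHermitian_kronecker hA hB),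
    rootEnt_congr (a := 0) (b := 0) (by simpa using hc)]
  rw [hD₁, hD₂, Matrix.diagonal_kronecker_diagonal, rootEnt_diagonal]
  rw [vnEntropy, dif_pos hA, vnEntropy, dif_pos hB]
  have hsplit : ∀ p : m × n, entg ((((↑) ∘ hA.eigenvalues) p.1 : ℂ) * (((↑) ∘ hB.eigenvalues) p.2 : ℂ))
      = hB.eigenvalues p.2 * -(hA.eigenvalues p.1 * Real.log (hA.eigenvalues p.1))
        + hA.eigenvalues p.1 * -(hB.eigenvalues p.2 * Real.log (hB.eigenvalues p.2)) := by
    intro p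
    rw [show ((((↑) ∘ hA.eigenvalues) p.1 : ℂ) * (((↑) ∘ hB.eigenvalues) p.2 : ℂ))
        = ((hA.eigenvalues p.1 * hB.eigenvalues p.2 : ℝ) : ℂ) by push_cast; rfl]
    rw [entg, Complex.ofReal_re]
    exact ent_mul_real _ _
  rw [Finset.sum_congr rfl (fun p _ => hsplit p)]
  rw [Finset.sum_add_distrib, Fintype.sum_prod_type, Fintype.sum_prod_type]
  have e1 : (∑ i : m, ∑ j : n,
        hB.eigenvalues j * -(hA.eigenvalues i * Real.log (hA.eigenvalues i)))
      = (∑ j : n, hB.eigenvalues j)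
        * (∑ i : m, -(hA.eigenvalues i * Real.log (hA.eigenvalues i))) := by
    rw [Finset.sum_comm, Finset.sum_mul_sum]
  have e2 : (∑ i : m, ∑ j : n,
        hA.eigenvalues i * -(hB.eigenvalues j * Real.log (hB.eigenvalues j)))
      = (∑ i : m, hA.eigenvalues i)
        * (∑ j : n, -(hB.eigenvalues j * Real.log (hB.eigenvalues j))) := by
    rw [Finset.sum_mul_sum]
  rw [e1, e2, sa, sb]
  simp [Finset.sum_neg_distrib]

end AUX2

section AUX3
open Matrix Kronecker

lemma sum_mul_factor {β γ : Type*} [Fintype β] [Fintype γ] (g : β → ℂ) (h : γ → ℂ) :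
    ∑ y : β × γ, g y.1 * h y.2 = (∑ b, g b) * (∑ c, h c) := by
  rw [Fintype.sum_prod_type]
  exact (Finset.sum_mul_sum _ _ _ _).symm

lemma sum_factor {ι κ₁ κ₂ κ₃ : Type*} [Fintype ι] [Fintype κ₁] [Fintype κ₂] [Fintype κ₃]
    (u : ι → κ₁) (v : ι → κ₂) (w : ι → κ₃)
    (hbij : Function.Bijective (fun x : ι => (u x, v x, w x)))
    (F : κ₁ → ℂ) (G : κ₂ → ℂ) (H : κ₃ → ℂ) :
    ∑ x : ι, F (u x) * G (v x) * H (w x)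
      = (∑ a, F a) * (∑ b, G b) * (∑ c, H c) := by
  rw [Fintype.sum_bijective _ hbij _ (fun y : κ₁ × κ₂ × κ₃ => F y.1 * G y.2.1 * H y.2.2)
    (fun x => rfl)]
  simp only [mul_assoc]
  rw [sum_mul_factor F (fun z : κ₂ × κ₃ => G z.1 * H z.2), sum_mul_factor G H]

lemma sum_factor2 {ι κ₁ κ₂ : Type*} [Fintype ι] [Fintype κ₁] [Fintype κ₂]
    (u : ι → κ₁) (v : ι → κ₂)
    (hbij : Function.Bijective (fun x : ι => (u x, v x)))
    (F : κ₁ → ℂ) (G : κ₂ → ℂ) :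
    ∑ x : ι, F (u x) * G (v x) = (∑ a, F a) * (∑ b, G b) := by
  rw [Fintype.sum_bijective _ hbij _ (fun y : κ₁ × κ₂ => F y.1 * G y.2) (fun x => rfl)]
  exact sum_mul_factor F G

lemma redDM_isHermitian {α β : Type*} [Fintype β] (ψ : α × β → ℂ) :
    (redDM ψ).IsHermitian := by
  rw [Matrix.IsHermitian]
  ext a a'
  simp [redDM, Matrix.conjTranspose_apply, mul_comm]

lemma redDM_eq_mul {α β : Type*} [Fintype β] (ψ : α × β → ℂ) :
    redDM ψ = (Matrix.of fun a b => ψ (a, b)) * (Matrix.of fun a b => ψ (a, b))ᴴ := by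
  ext a a'
  simp [redDM, Matrix.mul_apply, Matrix.conjTranspose_apply]

lemma trace_redDM {α β : Type*} [Fintype α] [Fintype β] (ψ : α × β → ℂ)
    (h : ∑ x : α × β, Complex.normSq (ψ x) = 1) : (redDM ψ).trace = 1 := by
  have : (redDM ψ).trace = ∑ x : α × β, (Complex.normSq (ψ x) : ℂ) := by
    rw [Matrix.trace]
    simp only [Matrix.diag, redDM, Matrix.of_apply, Complex.mul_conj]
    rw [Fintype.sum_prod_type]
  rw [this, ← Complex.ofReal_sum, h, Complex.ofReal_one]

lemma vnEntropy_redDM_swap {α β : Type*} [Fintype α] [DecidableEq α] [Fintype β] [DecidableEq β]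
    (ψ : α × β → ℂ) :
    vnEntropy (redDM (fun p : β × α => ψ (p.2, p.1))) = vnEntropy (redDM ψ) := by
  set G : Matrix α β ℂ := Matrix.of fun a b => ψ (a, b) with hG
  have h1 : redDM ψ = G * Gᴴ := redDM_eq_mul ψ
  have h2 : redDM (fun p : β × α => ψ (p.2, p.1)) = (Gᴴ * G)ᵀ := by
    ext b b'
    simp only [redDM, Matrix.of_apply, Matrix.transpose_apply, Matrix.mul_apply,
      Matrix.conjTranspose_apply, hG]
    exact Finset.sum_congr rfl fun a _ => by simp [mul_comm]
  rw [h1, h2]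
  have htr : vnEntropy (Gᴴ * G)ᵀ = vnEntropy (Gᴴ * G) := by
    have hherm : (Gᴴ * G).IsHermitian := Matrix.isHermitian_conjTranspose_mul_self G
    rw [vnEntropy_eq_rootEnt hherm.transpose, vnEntropy_eq_rootEnt hherm]
    exact rootEnt_congr (a := 0) (b := 0) (by rw [pow_zero, one_mul, one_mul, my_charpoly_transpose])
  rw [htr, ← vnEntropy_mul_conjTranspose]

lemma vnEntropy_pure {γ : Type*} [Fintype γ] [DecidableEq γ] (φ : γ → ℂ)
    (h : ∑ x, Complex.normSq (φ x) = 1) :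
    vnEntropy (Matrix.of fun u u' : γ => φ u * (starRingEnd ℂ) (φ u')) = 0 := by
  have hred : (Matrix.of fun u u' : γ => φ u * (starRingEnd ℂ) (φ u'))
      = redDM (fun p : γ × Fin 1 => φ p.1) := by
    ext u u'; simp [redDM]
  rw [hred]
  have hswap := vnEntropy_redDM_swap (fun p : γ × Fin 1 => φ p.1)
  rw [← hswap]
  have hone : redDM (fun p : Fin 1 × γ => φ p.2) = Matrix.diagonal (fun _ : Fin 1 => (1 : ℂ)) := by
    ext i j
    fin_cases i; fin_cases j
    simp only [redDM, Matrix.of_apply, Matrix.diagonal_apply_eq]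
    simp_rw [Complex.mul_conj]
    rw [← Complex.ofReal_sum, h, Complex.ofReal_one]
  rw [show (fun p : Fin 1 × γ => φ (Prod.mk p.2 p.1).1) = (fun p : Fin 1 × γ => φ p.2) from rfl,
    hone]
  have hdiagherm : (Matrix.diagonal (fun _ : Fin 1 => (1 : ℂ))).IsHermitian := by
    rw [Matrix.IsHermitian, Matrix.diagonal_conjTranspose]
    simp [Pi.star_def]
  rw [vnEntropy_eq_rootEnt hdiagherm, rootEnt_diagonal]
  simp

end AUX3

section
variable {aL aR bL bR cL cR : ℕ}

/-- The triangle state `ψ = ψ₁_{A_R B_L} ⊗ ψ₂_{B_R C_L} ⊗ ψ₃_{C_R A_L}` on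
`H_A ⊗ H_B ⊗ H_C` with `H_α = H_{α_L} ⊗ H_{α_R}`. -/
noncomputable def triangle (ψ₁ : Fin aR × Fin bL → ℂ) (ψ₂ : Fin bR × Fin cL → ℂ)
    (ψ₃ : Fin cR × Fin aL → ℂ) :
    (Fin aL × Fin aR) × (Fin bL × Fin bR) × (Fin cL × Fin cR) → ℂ :=
  fun p => ψ₁ (p.1.2, p.2.1.1) * ψ₂ (p.2.1.2, p.2.2.1) * ψ₃ (p.2.2.2, p.1.1)

variable (ψ : (Fin aL × Fin aR) × (Fin bL × Fin bR) × (Fin cL × Fin cR) → ℂ)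

/-- `S(A)`. -/
noncomputable def S_A : ℝ := SE ψ
/-- `S(A_L)`. -/
noncomputable def S_AL : ℝ :=
  SE (fun p : Fin aL × (Fin aR × (Fin bL × Fin bR) × (Fin cL × Fin cR)) =>
    ψ ((p.1, p.2.1), p.2.2))
/-- `S(A_R)`. -/
noncomputable def S_AR : ℝ :=
  SE (fun p : Fin aR × (Fin aL × (Fin bL × Fin bR) × (Fin cL × Fin cR)) =>
    ψ ((p.2.1, p.1), p.2.2))
/-- `S(B)`. -/
noncomputable def S_B : ℝ :=
  SE (fun p : (Fin bL × Fin bR) × ((Fin aL × Fin aR) × (Fin cL × Fin cR)) =>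
    ψ (p.2.1, p.1, p.2.2))
/-- `S(C)`. -/
noncomputable def S_C : ℝ :=
  SE (fun p : (Fin cL × Fin cR) × ((Fin aL × Fin aR) × (Fin bL × Fin bR)) =>
    ψ (p.2.1, p.2.2, p.1))
/-- `S(AB)`. -/
noncomputable def S_AB : ℝ :=
  SE (fun p : ((Fin aL × Fin aR) × (Fin bL × Fin bR)) × (Fin cL × Fin cR) =>
    ψ (p.1.1, p.1.2, p.2))
/-- `S(AC)`. -/
noncomputable def S_AC : ℝ :=
  SE (fun p : ((Fin aL × Fin aR) × (Fin cL × Fin cR)) × (Fin bL × Fin bR) =>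
    ψ (p.1.1, p.2, p.1.2))

end

section COMP
open Matrix Kronecker

lemma normC {γ : Type*} [Fintype γ] (φ : γ → ℂ) (h : ∑ x, Complex.normSq (φ x) = 1) :
    ∑ x, φ x * (starRingEnd ℂ) (φ x) = 1 := by
  simp_rw [Complex.mul_conj]
  rw [← Complex.ofReal_sum, h, Complex.ofReal_one]

lemma norm_swap {α β : Type*} [Fintype α] [Fintype β] (φ : α × β → ℂ)
    (h : ∑ x : α × β, Complex.normSq (φ x) = 1) :
    ∑ x : β × α, Complex.normSq (φ (x.2, x.1)) = 1 := by
  rw [← h]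
  exact Fintype.sum_equiv (Equiv.prodComm β α) _ _ (fun x => rfl)

variable {aL aR bL bR cL cR : ℕ}
variable (ψ₁ : Fin aR × Fin bL → ℂ) (ψ₂ : Fin bR × Fin cL → ℂ) (ψ₃ : Fin cR × Fin aL → ℂ)

noncomputable def M1 : Matrix (Fin aR) (Fin aR) ℂ := redDM ψ₁
noncomputable def M1' : Matrix (Fin bL) (Fin bL) ℂ :=
  redDM (fun p : Fin bL × Fin aR => ψ₁ (p.2, p.1))
noncomputable def M2 : Matrix (Fin bR) (Fin bR) ℂ := redDM ψ₂
noncomputable def M2' : Matrix (Fin cL) (Fin cL) ℂ :=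
  redDM (fun p : Fin cL × Fin bR => ψ₂ (p.2, p.1))
noncomputable def M3 : Matrix (Fin cR) (Fin cR) ℂ := redDM ψ₃
noncomputable def M3' : Matrix (Fin aL) (Fin aL) ℂ :=
  redDM (fun p : Fin aL × Fin cR => ψ₃ (p.2, p.1))
noncomputable def P1 : Matrix (Fin aR × Fin bL) (Fin aR × Fin bL) ℂ :=
  Matrix.of fun u u' => ψ₁ u * (starRingEnd ℂ) (ψ₁ u')
noncomputable def P3 : Matrix (Fin cR × Fin aL) (Fin cR × Fin aL) ℂ :=
  Matrix.of fun u u' => ψ₃ u * (starRingEnd ℂ) (ψ₃ u')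

lemma P1_eq : P1 ψ₁ = redDM (fun p : (Fin aR × Fin bL) × Fin 1 => ψ₁ p.1) := by
  ext u u'; simp [P1, redDM]

lemma P3_eq : P3 ψ₃ = redDM (fun p : (Fin cR × Fin aL) × Fin 1 => ψ₃ p.1) := by
  ext u u'; simp [P3, redDM]

section WithNorm
variable (h₁ : ∑ x : Fin aR × Fin bL, Complex.normSq (ψ₁ x) = 1)
  (h₂ : ∑ x : Fin bR × Fin cL, Complex.normSq (ψ₂ x) = 1)
  (h₃ : ∑ x : Fin cR × Fin aL, Complex.normSq (ψ₃ x) = 1)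

include h₂ in
lemma redA : redDM (triangle ψ₁ ψ₂ ψ₃)
    = Matrix.kroneckerMap (· * ·) (M3' ψ₃) (M1 ψ₁) := by
  ext ⟨a1, a2⟩ ⟨a1', a2'⟩
  show ∑ b : (Fin bL × Fin bR) × (Fin cL × Fin cR),
      triangle ψ₁ ψ₂ ψ₃ ((a1, a2), b) * (starRingEnd ℂ) (triangle ψ₁ ψ₂ ψ₃ ((a1', a2'), b)) = _
  have step : ∀ b : (Fin bL × Fin bR) × (Fin cL × Fin cR),
      triangle ψ₁ ψ₂ ψ₃ ((a1, a2), b) * (starRingEnd ℂ) (triangle ψ₁ ψ₂ ψ₃ ((a1', a2'), b))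
        = (fun u => ψ₁ (a2, u) * (starRingEnd ℂ) (ψ₁ (a2', u))) b.1.1
          * (fun v => ψ₂ v * (starRingEnd ℂ) (ψ₂ v)) (b.1.2, b.2.1)
          * (fun w => ψ₃ (w, a1) * (starRingEnd ℂ) (ψ₃ (w, a1'))) b.2.2 := by
    intro b; simp only [triangle, _root_.map_mul]; ring
  rw [Finset.sum_congr rfl fun b _ => step b]
  rw [sum_factor (fun b => b.1.1) (fun b => (b.1.2, b.2.1)) (fun b => b.2.2)
    (Function.bijective_iff_has_inverse.mpr ⟨fun y => ((y.1, y.2.1.1), (y.2.1.2, y.2.2)),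
      fun _ => rfl, fun _ => rfl⟩)
    (fun u => ψ₁ (a2, u) * (starRingEnd ℂ) (ψ₁ (a2', u)))
    (fun v => ψ₂ v * (starRingEnd ℂ) (ψ₂ v))
    (fun w => ψ₃ (w, a1) * (starRingEnd ℂ) (ψ₃ (w, a1')))]
  rw [normC ψ₂ h₂, mul_one]
  simp only [M3', M1, redDM, Matrix.kroneckerMap_apply, Matrix.of_apply]
  ring

include h₁ h₂ in
lemma redAL : redDM (fun p : Fin aL × (Fin aR × (Fin bL × Fin bR) × (Fin cL × Fin cR)) =>
      triangle ψ₁ ψ₂ ψ₃ ((p.1, p.2.1), p.2.2)) = M3' ψ₃ := by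
  ext a1 a1'
  show ∑ x : Fin aR × (Fin bL × Fin bR) × (Fin cL × Fin cR),
      triangle ψ₁ ψ₂ ψ₃ ((a1, x.1), x.2) * (starRingEnd ℂ) (triangle ψ₁ ψ₂ ψ₃ ((a1', x.1), x.2)) = _
  have step : ∀ x : Fin aR × (Fin bL × Fin bR) × (Fin cL × Fin cR),
      triangle ψ₁ ψ₂ ψ₃ ((a1, x.1), x.2) * (starRingEnd ℂ) (triangle ψ₁ ψ₂ ψ₃ ((a1', x.1), x.2))
        = (fun u => ψ₁ u * (starRingEnd ℂ) (ψ₁ u)) (x.1, x.2.1.1)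
          * (fun v => ψ₂ v * (starRingEnd ℂ) (ψ₂ v)) (x.2.1.2, x.2.2.1)
          * (fun w => ψ₃ (w, a1) * (starRingEnd ℂ) (ψ₃ (w, a1'))) x.2.2.2 := by
    intro x; simp only [triangle, _root_.map_mul]; ring
  rw [Finset.sum_congr rfl fun x _ => step x]
  rw [sum_factor (fun x => (x.1, x.2.1.1)) (fun x => (x.2.1.2, x.2.2.1)) (fun x => x.2.2.2)
    (Function.bijective_iff_has_inverse.mpr
      ⟨fun y => (y.1.1, ((y.1.2, y.2.1.1), (y.2.1.2, y.2.2))), fun _ => rfl, fun _ => rfl⟩)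
    (fun u => ψ₁ u * (starRingEnd ℂ) (ψ₁ u))
    (fun v => ψ₂ v * (starRingEnd ℂ) (ψ₂ v))
    (fun w => ψ₃ (w, a1) * (starRingEnd ℂ) (ψ₃ (w, a1')))]
  rw [normC ψ₁ h₁, normC ψ₂ h₂, one_mul, one_mul]
  simp only [M3', redDM, Matrix.of_apply]

include h₂ h₃ in
lemma redAR : redDM (fun p : Fin aR × (Fin aL × (Fin bL × Fin bR) × (Fin cL × Fin cR)) =>
      triangle ψ₁ ψ₂ ψ₃ ((p.2.1, p.1), p.2.2)) = M1 ψ₁ := by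
  ext a2 a2'
  show ∑ x : Fin aL × (Fin bL × Fin bR) × (Fin cL × Fin cR),
      triangle ψ₁ ψ₂ ψ₃ ((x.1, a2), x.2) * (starRingEnd ℂ) (triangle ψ₁ ψ₂ ψ₃ ((x.1, a2'), x.2)) = _
  have step : ∀ x : Fin aL × (Fin bL × Fin bR) × (Fin cL × Fin cR),
      triangle ψ₁ ψ₂ ψ₃ ((x.1, a2), x.2) * (starRingEnd ℂ) (triangle ψ₁ ψ₂ ψ₃ ((x.1, a2'), x.2))
        = (fun u => ψ₁ (a2, u) * (starRingEnd ℂ) (ψ₁ (a2', u))) x.2.1.1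
          * (fun v => ψ₂ v * (starRingEnd ℂ) (ψ₂ v)) (x.2.1.2, x.2.2.1)
          * (fun w => ψ₃ w * (starRingEnd ℂ) (ψ₃ w)) (x.2.2.2, x.1) := by
    intro x; simp only [triangle, _root_.map_mul]; ring
  rw [Finset.sum_congr rfl fun x _ => step x]
  rw [sum_factor (fun x => x.2.1.1) (fun x => (x.2.1.2, x.2.2.1)) (fun x => (x.2.2.2, x.1))
    (Function.bijective_iff_has_inverse.mpr
      ⟨fun y => (y.2.2.2, ((y.1, y.2.1.1), (y.2.1.2, y.2.2.1))), fun _ => rfl, fun _ => rfl⟩)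
    (fun u => ψ₁ (a2, u) * (starRingEnd ℂ) (ψ₁ (a2', u)))
    (fun v => ψ₂ v * (starRingEnd ℂ) (ψ₂ v))
    (fun w => ψ₃ w * (starRingEnd ℂ) (ψ₃ w))]
  rw [normC ψ₂ h₂, normC ψ₃ h₃, mul_one, mul_one]
  simp only [M1, redDM, Matrix.of_apply]

include h₃ in
lemma redB : redDM (fun p : (Fin bL × Fin bR) × ((Fin aL × Fin aR) × (Fin cL × Fin cR)) =>
      triangle ψ₁ ψ₂ ψ₃ (p.2.1, p.1, p.2.2))
    = Matrix.kroneckerMap (· * ·) (M1' ψ₁) (M2 ψ₂) := by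
  ext ⟨b1, b2⟩ ⟨b1', b2'⟩
  show ∑ x : (Fin aL × Fin aR) × (Fin cL × Fin cR),
      triangle ψ₁ ψ₂ ψ₃ (x.1, (b1, b2), x.2)
        * (starRingEnd ℂ) (triangle ψ₁ ψ₂ ψ₃ (x.1, (b1', b2'), x.2)) = _
  have step : ∀ x : (Fin aL × Fin aR) × (Fin cL × Fin cR),
      triangle ψ₁ ψ₂ ψ₃ (x.1, (b1, b2), x.2)
        * (starRingEnd ℂ) (triangle ψ₁ ψ₂ ψ₃ (x.1, (b1', b2'), x.2))
        = (fun u => ψ₁ (u, b1) * (starRingEnd ℂ) (ψ₁ (u, b1'))) x.1.2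
          * (fun v => ψ₂ (b2, v) * (starRingEnd ℂ) (ψ₂ (b2', v))) x.2.1
          * (fun w => ψ₃ w * (starRingEnd ℂ) (ψ₃ w)) (x.2.2, x.1.1) := by
    intro x; simp only [triangle, _root_.map_mul]; ring
  rw [Finset.sum_congr rfl fun x _ => step x]
  rw [sum_factor (fun x => x.1.2) (fun x => x.2.1) (fun x => (x.2.2, x.1.1))
    (Function.bijective_iff_has_inverse.mpr
      ⟨fun y => ((y.2.2.2, y.1), (y.2.1, y.2.2.1)), fun _ => rfl, fun _ => rfl⟩)
    (fun u => ψ₁ (u, b1) * (starRingEnd ℂ) (ψ₁ (u, b1')))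
    (fun v => ψ₂ (b2, v) * (starRingEnd ℂ) (ψ₂ (b2', v)))
    (fun w => ψ₃ w * (starRingEnd ℂ) (ψ₃ w))]
  rw [normC ψ₃ h₃, mul_one]
  simp only [M1', M2, redDM, Matrix.kroneckerMap_apply, Matrix.of_apply]

include h₁ in
lemma redC : redDM (fun p : (Fin cL × Fin cR) × ((Fin aL × Fin aR) × (Fin bL × Fin bR)) =>
      triangle ψ₁ ψ₂ ψ₃ (p.2.1, p.2.2, p.1))
    = Matrix.kroneckerMap (· * ·) (M2' ψ₂) (M3 ψ₃) := by
  ext ⟨c1, c2⟩ ⟨c1', c2'⟩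
  show ∑ x : (Fin aL × Fin aR) × (Fin bL × Fin bR),
      triangle ψ₁ ψ₂ ψ₃ (x.1, x.2, (c1, c2))
        * (starRingEnd ℂ) (triangle ψ₁ ψ₂ ψ₃ (x.1, x.2, (c1', c2'))) = _
  have step : ∀ x : (Fin aL × Fin aR) × (Fin bL × Fin bR),
      triangle ψ₁ ψ₂ ψ₃ (x.1, x.2, (c1, c2))
        * (starRingEnd ℂ) (triangle ψ₁ ψ₂ ψ₃ (x.1, x.2, (c1', c2')))
        = (fun u => ψ₁ u * (starRingEnd ℂ) (ψ₁ u)) (x.1.2, x.2.1)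
          * (fun v => ψ₂ (v, c1) * (starRingEnd ℂ) (ψ₂ (v, c1'))) x.2.2
          * (fun w => ψ₃ (c2, w) * (starRingEnd ℂ) (ψ₃ (c2', w))) x.1.1 := by
    intro x; simp only [triangle, _root_.map_mul]; ring
  rw [Finset.sum_congr rfl fun x _ => step x]
  rw [sum_factor (fun x => (x.1.2, x.2.1)) (fun x => x.2.2) (fun x => x.1.1)
    (Function.bijective_iff_has_inverse.mpr
      ⟨fun y => ((y.2.2, y.1.1), (y.1.2, y.2.1)), fun _ => rfl, fun _ => rfl⟩)
    (fun u => ψ₁ u * (starRingEnd ℂ) (ψ₁ u))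
    (fun v => ψ₂ (v, c1) * (starRingEnd ℂ) (ψ₂ (v, c1')))
    (fun w => ψ₃ (c2, w) * (starRingEnd ℂ) (ψ₃ (c2', w)))]
  rw [normC ψ₁ h₁, one_mul]
  simp only [M2', M3, redDM, Matrix.kroneckerMap_apply, Matrix.of_apply]

end WithNorm

/-- regrouping equivalence for `AB`. -/
def equivAB : ((Fin aL × Fin aR) × (Fin bL × Fin bR)) ≃ (Fin aL × ((Fin aR × Fin bL) × Fin bR)) :=
  ⟨fun p => (p.1.1, ((p.1.2, p.2.1), p.2.2)), fun y => ((y.1, y.2.1.1), (y.2.1.2, y.2.2)),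
    fun _ => rfl, fun _ => rfl⟩

/-- regrouping equivalence for `AC`. -/
def equivAC : ((Fin aL × Fin aR) × (Fin cL × Fin cR)) ≃ (Fin aR × (Fin cL × (Fin cR × Fin aL))) :=
  ⟨fun p => (p.1.2, (p.2.1, (p.2.2, p.1.1))), fun y => ((y.2.2.2, y.1), (y.2.1, y.2.2.1)),
    fun _ => rfl, fun _ => rfl⟩

lemma redAB : redDM (fun p : ((Fin aL × Fin aR) × (Fin bL × Fin bR)) × (Fin cL × Fin cR) =>
      triangle ψ₁ ψ₂ ψ₃ (p.1.1, p.1.2, p.2))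
    = (Matrix.kroneckerMap (· * ·) (M3' ψ₃)
        (Matrix.kroneckerMap (· * ·) (P1 ψ₁) (M2 ψ₂))).submatrix equivAB equivAB := by
  ext ⟨⟨a1, a2⟩, ⟨b1, b2⟩⟩ ⟨⟨a1', a2'⟩, ⟨b1', b2'⟩⟩
  show ∑ x : Fin cL × Fin cR,
      triangle ψ₁ ψ₂ ψ₃ ((a1, a2), (b1, b2), x)
        * (starRingEnd ℂ) (triangle ψ₁ ψ₂ ψ₃ ((a1', a2'), (b1', b2'), x)) = _
  have step : ∀ x : Fin cL × Fin cR,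
      triangle ψ₁ ψ₂ ψ₃ ((a1, a2), (b1, b2), x)
        * (starRingEnd ℂ) (triangle ψ₁ ψ₂ ψ₃ ((a1', a2'), (b1', b2'), x))
        = (ψ₁ (a2, b1) * (starRingEnd ℂ) (ψ₁ (a2', b1')))
          * ((fun v => ψ₂ (b2, v) * (starRingEnd ℂ) (ψ₂ (b2', v))) x.1
            * (fun w => ψ₃ (w, a1) * (starRingEnd ℂ) (ψ₃ (w, a1'))) x.2) := by
    intro x; simp only [triangle, _root_.map_mul]; ring
  rw [Finset.sum_congr rfl fun x _ => step x, ← Finset.mul_sum]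
  rw [sum_mul_factor (fun v => ψ₂ (b2, v) * (starRingEnd ℂ) (ψ₂ (b2', v)))
    (fun w => ψ₃ (w, a1) * (starRingEnd ℂ) (ψ₃ (w, a1')))]
  simp only [Matrix.submatrix_apply, equivAB, Equiv.coe_fn_mk, Matrix.kroneckerMap_apply,
    M3', P1, M2, redDM, Matrix.of_apply]
  ring

lemma redAC : redDM (fun p : ((Fin aL × Fin aR) × (Fin cL × Fin cR)) × (Fin bL × Fin bR) =>
      triangle ψ₁ ψ₂ ψ₃ (p.1.1, p.2, p.1.2))
    = (Matrix.kroneckerMap (· * ·) (M1 ψ₁)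
        (Matrix.kroneckerMap (· * ·) (M2' ψ₂) (P3 ψ₃))).submatrix equivAC equivAC := by
  ext ⟨⟨a1, a2⟩, ⟨c1, c2⟩⟩ ⟨⟨a1', a2'⟩, ⟨c1', c2'⟩⟩
  show ∑ x : Fin bL × Fin bR,
      triangle ψ₁ ψ₂ ψ₃ ((a1, a2), x, (c1, c2))
        * (starRingEnd ℂ) (triangle ψ₁ ψ₂ ψ₃ ((a1', a2'), x, (c1', c2'))) = _
  have step : ∀ x : Fin bL × Fin bR,
      triangle ψ₁ ψ₂ ψ₃ ((a1, a2), x, (c1, c2))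
        * (starRingEnd ℂ) (triangle ψ₁ ψ₂ ψ₃ ((a1', a2'), x, (c1', c2')))
        = (ψ₃ (c2, a1) * (starRingEnd ℂ) (ψ₃ (c2', a1')))
          * ((fun u => ψ₁ (a2, u) * (starRingEnd ℂ) (ψ₁ (a2', u))) x.1
            * (fun v => ψ₂ (v, c1) * (starRingEnd ℂ) (ψ₂ (v, c1'))) x.2) := by
    intro x; simp only [triangle, _root_.map_mul]; ring
  rw [Finset.sum_congr rfl fun x _ => step x, ← Finset.mul_sum]
  rw [sum_mul_factor (fun u => ψ₁ (a2, u) * (starRingEnd ℂ) (ψ₁ (a2', u)))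
    (fun v => ψ₂ (v, c1) * (starRingEnd ℂ) (ψ₂ (v, c1')))]
  simp only [Matrix.submatrix_apply, equivAC, Equiv.coe_fn_mk, Matrix.kroneckerMap_apply,
    M1, M2', P3, redDM, Matrix.of_apply]
  ring

end COMP

/-- For a triangle state, `S(A) = S(A_L) + S(A_R)`, with
`S(A_R) = ½ I(A:B)` and `S(A_L) = ½ I(A:C)`; hence `2 S(A) = I(A:B) + I(A:C)`. -/
theorem triangle_entropy_split (aL aR bL bR cL cR : ℕ)
    (ψ₁ : Fin aR × Fin bL → ℂ) (ψ₂ : Fin bR × Fin cL → ℂ) (ψ₃ : Fin cR × Fin aL → ℂ)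
    (h₁ : ∑ x : Fin aR × Fin bL, Complex.normSq (ψ₁ x) = 1)
    (h₂ : ∑ x : Fin bR × Fin cL, Complex.normSq (ψ₂ x) = 1)
    (h₃ : ∑ x : Fin cR × Fin aL, Complex.normSq (ψ₃ x) = 1) :
    S_A (triangle ψ₁ ψ₂ ψ₃) = S_AL (triangle ψ₁ ψ₂ ψ₃) + S_AR (triangle ψ₁ ψ₂ ψ₃) ∧
    S_AR (triangle ψ₁ ψ₂ ψ₃) =
      (1 / 2) * (S_A (triangle ψ₁ ψ₂ ψ₃) + S_B (triangle ψ₁ ψ₂ ψ₃)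
        - S_AB (triangle ψ₁ ψ₂ ψ₃)) ∧
    S_AL (triangle ψ₁ ψ₂ ψ₃) =
      (1 / 2) * (S_A (triangle ψ₁ ψ₂ ψ₃) + S_C (triangle ψ₁ ψ₂ ψ₃)
        - S_AC (triangle ψ₁ ψ₂ ψ₃)) ∧
    2 * S_A (triangle ψ₁ ψ₂ ψ₃) =
      (S_A (triangle ψ₁ ψ₂ ψ₃) + S_B (triangle ψ₁ ψ₂ ψ₃) - S_AB (triangle ψ₁ ψ₂ ψ₃)) +
      (S_A (triangle ψ₁ ψ₂ ψ₃) + S_C (triangle ψ₁ ψ₂ ψ₃) - S_AC (triangle ψ₁ ψ₂ ψ₃)) := by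
  have hM1herm : (M1 ψ₁).IsHermitian := redDM_isHermitian _
  have hM1'herm : (M1' ψ₁).IsHermitian := redDM_isHermitian _
  have hM2herm : (M2 ψ₂).IsHermitian := redDM_isHermitian _
  have hM2'herm : (M2' ψ₂).IsHermitian := redDM_isHermitian _
  have hM3herm : (M3 ψ₃).IsHermitian := redDM_isHermitian _
  have hM3'herm : (M3' ψ₃).IsHermitian := redDM_isHermitian _
  have hM1tr : (M1 ψ₁).trace = 1 := trace_redDM _ h₁
  have hM1'tr : (M1' ψ₁).trace = 1 := trace_redDM _ (norm_swap ψ₁ h₁)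
  have hM2tr : (M2 ψ₂).trace = 1 := trace_redDM _ h₂
  have hM2'tr : (M2' ψ₂).trace = 1 := trace_redDM _ (norm_swap ψ₂ h₂)
  have hM3tr : (M3 ψ₃).trace = 1 := trace_redDM _ h₃
  have hM3'tr : (M3' ψ₃).trace = 1 := trace_redDM _ (norm_swap ψ₃ h₃)
  have hP1herm : (P1 ψ₁).IsHermitian := by rw [P1_eq]; exact redDM_isHermitian _
  have hP3herm : (P3 ψ₃).IsHermitian := by rw [P3_eq]; exact redDM_isHermitian _
  have hP1tr : (P1 ψ₁).trace = 1 := by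
    rw [P1_eq]; exact trace_redDM _ (by rw [Fintype.sum_prod_type]; simpa using h₁)
  have hP3tr : (P3 ψ₃).trace = 1 := by
    rw [P3_eq]; exact trace_redDM _ (by rw [Fintype.sum_prod_type]; simpa using h₃)
  have hP1ent : vnEntropy (P1 ψ₁) = 0 := by rw [P1]; exact vnEntropy_pure ψ₁ h₁
  have hP3ent : vnEntropy (P3 ψ₃) = 0 := by rw [P3]; exact vnEntropy_pure ψ₃ h₃
  have eA : S_A (triangle ψ₁ ψ₂ ψ₃) = vnEntropy (M3' ψ₃) + vnEntropy (M1 ψ₁) := by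
    rw [S_A, SE, redA ψ₁ ψ₂ ψ₃ h₂]
    exact vnEntropy_kronecker hM3'herm hM1herm hM3'tr hM1tr
  have eAL : S_AL (triangle ψ₁ ψ₂ ψ₃) = vnEntropy (M3' ψ₃) := by
    rw [S_AL, SE, redAL ψ₁ ψ₂ ψ₃ h₁ h₂]
  have eAR : S_AR (triangle ψ₁ ψ₂ ψ₃) = vnEntropy (M1 ψ₁) := by
    rw [S_AR, SE, redAR ψ₁ ψ₂ ψ₃ h₂ h₃]
  have eB : S_B (triangle ψ₁ ψ₂ ψ₃) = vnEntropy (M1' ψ₁) + vnEntropy (M2 ψ₂) := by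
    rw [S_B, SE, redB ψ₁ ψ₂ ψ₃ h₃]
    exact vnEntropy_kronecker hM1'herm hM2herm hM1'tr hM2tr
  have eC : S_C (triangle ψ₁ ψ₂ ψ₃) = vnEntropy (M2' ψ₂) + vnEntropy (M3 ψ₃) := by
    rw [S_C, SE, redC ψ₁ ψ₂ ψ₃ h₁]
    exact vnEntropy_kronecker hM2'herm hM3herm hM2'tr hM3tr
  have eAB : S_AB (triangle ψ₁ ψ₂ ψ₃) = vnEntropy (M3' ψ₃) + vnEntropy (M2 ψ₂) := by
    rw [S_AB, SE, redAB ψ₁ ψ₂ ψ₃]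
    rw [vnEntropy_submatrix (isHermitian_kronecker hM3'herm
      (isHermitian_kronecker hP1herm hM2herm)) equivAB]
    rw [vnEntropy_kronecker hM3'herm (isHermitian_kronecker hP1herm hM2herm)
      hM3'tr (by rw [Matrix.trace_kronecker, hP1tr, hM2tr, one_mul])]
    rw [vnEntropy_kronecker hP1herm hM2herm hP1tr hM2tr, hP1ent, zero_add]
  have eAC : S_AC (triangle ψ₁ ψ₂ ψ₃) = vnEntropy (M1 ψ₁) + vnEntropy (M2' ψ₂) := by
    rw [S_AC, SE, redAC ψ₁ ψ₂ ψ₃]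
    rw [vnEntropy_submatrix (isHermitian_kronecker hM1herm
      (isHermitian_kronecker hM2'herm hP3herm)) equivAC]
    rw [vnEntropy_kronecker hM1herm (isHermitian_kronecker hM2'herm hP3herm)
      hM1tr (by rw [Matrix.trace_kronecker, hP3tr, hM2'tr, mul_one])]
    rw [vnEntropy_kronecker hM2'herm hP3herm hM2'tr hP3tr, hP3ent, add_zero]
  have sw1 : vnEntropy (M1' ψ₁) = vnEntropy (M1 ψ₁) := by
    rw [M1', M1]; exact vnEntropy_redDM_swap ψ₁
  have sw3 : vnEntropy (M3' ψ₃) = vnEntropy (M3 ψ₃) := by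
    rw [M3', M3]; exact vnEntropy_redDM_swap ψ₃
  refine ⟨?_, ?_, ?_, ?_⟩ <;>
    simp only [eA, eAL, eAR, eB, eC, eAB, eAC] <;> linarith [sw1, sw3]
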